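/- arXiv:math/9911094 — 2 statements merged into one kernel-verified Lean document; each statement's English description precedes it below -/
import Mathlib

section
/- Let f ∈ ℂ_p[x_1,...,x_n] be a nonzero polynomial and Ω ⊂ 𝔸^n(ℂ_p) a nonempty Zariski open set. Then the Gauss norm |f|_p (the maximum of the p-adic absolute values of the coefficients of f) equals max{ |f(z)|_p : z ∈ Ω, |z_i|_p = 1 for all i }. -/
/-!
If `Ω` is the complement of the zero locus of `I`, some `g ∈ I` is nonzero at a point of `Ω`, and
every point where `g` does not vanish lies in `Ω`. On the unit torus `|f(z)| ≤ |f|` and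
`|g(z)| ≤ |g|`, so at a torus point with `|(fg)(z)| = |fg|`, Gauss's lemma `|f| |g| ≤ |fg|` forces
`|f(z)| = |f|` and `g(z) ≠ 0`.

Every polynomial `h` attains its Gauss norm on the torus, at a point with roots of unity as
coordinates: take `q` larger than the degree of `h` with `|q| = 1` and a primitive `q`-th root of
unity `ζ`. Discrete Fourier inversion writes `q ^ n` times the coefficient `c_α` of `h` as a sum of
the values `h(ζ ^ k)` multiplied by roots of unity; for `c_α` of maximal norm, the ultrametric
inequality then gives `|h| ≤ max_k |h(ζ ^ k)|`.
-/

open MvPolynomial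

noncomputable def gaussNorm {K : Type*} [NontriviallyNormedField K] {n : ℕ}
    (f : MvPolynomial (Fin n) K) : NNReal :=
  f.support.sup fun α => ‖f.coeff α‖₊

theorem MonomialOrder.toSyn_lt_or_toSyn_lt_of_add_eq {σ : Type*} (m : MonomialOrder σ)
    {u v a b : σ →₀ ℕ} (h : u + v = a + b) (hne : (u, v) ≠ (a, b)) :
    m.toSyn u < m.toSyn a ∨ m.toSyn v < m.toSyn b := by
  by_contra! hle
  have hsyn : m.toSyn a + m.toSyn b = m.toSyn u + m.toSyn v := by simp only [← map_add, h]
  obtain ⟨hau, hbv⟩ := (add_eq_add_iff_eq_and_eq hle.1 hle.2).mp hsyn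
  exact hne (by rw [m.toSyn.injective hau, m.toSyn.injective hbv])

theorem exists_lt_natCast_nnnorm_eq_one (K : Type*) [NormedField K] [IsUltrametricDist K]
    (B : ℕ) : ∃ q : ℕ, B < q ∧ ‖(q : K)‖₊ = 1 := by
  by_contra! h
  have hlt : ∀ k : ℕ, B < k → ‖(k : K)‖₊ < 1 := fun k hk =>
    (IsUltrametricDist.nnnorm_natCast_le_one K k).lt_of_ne (h k hk)
  -- `1 = (B + 2) - (B + 1)`, so the ultrametric inequality forces one of them to have norm `1`.
  have hmax : ‖((B + 2 : ℕ) : K) + -((B + 1 : ℕ) : K)‖₊ ≤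
      max ‖((B + 2 : ℕ) : K)‖₊ ‖-((B + 1 : ℕ) : K)‖₊ :=
    IsUltrametricDist.nnnorm_add_le_max _ _
  have hone : ((B + 2 : ℕ) : K) + -((B + 1 : ℕ) : K) = 1 := by push_cast; ring
  rw [nnnorm_neg, hone, nnnorm_one] at hmax
  exact (max_lt (hlt _ (by omega)) (hlt _ (by omega))).not_ge hmax

theorem IsPrimitiveRoot.geom_sum_pow_div_pow {K : Type*} [Field K] {ζ : K} {q a b : ℕ}
    (hζ : IsPrimitiveRoot ζ q) (ha : a < q) (hb : b < q) :
    ∑ j ∈ Finset.range q, (ζ ^ a / ζ ^ b) ^ j = if a = b then (q : K) else 0 := by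
  have hζ0 : ζ ≠ 0 := hζ.ne_zero (by omega)
  split_ifs with hab
  · simp [hab, hζ0]
  · have hne : ζ ^ a / ζ ^ b ≠ 1 := fun h =>
      hab (hζ.pow_inj ha hb (div_eq_one_iff_eq (pow_ne_zero _ hζ0) |>.mp h))
    have hpow : (ζ ^ a / ζ ^ b) ^ q = 1 := by
      rw [div_pow, ← pow_mul, ← pow_mul, pow_mul', pow_mul' ζ b, hζ.pow_eq_one, one_pow, one_pow,
        div_one]
    rw [geom_sum_eq hne, hpow, sub_self, zero_div]

theorem IsPrimitiveRoot.sum_mul_eval_pow {K : Type*} [Field K] {ζ : K} {q n : ℕ}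
    (hζ : IsPrimitiveRoot ζ q) (h : MvPolynomial (Fin n) K) (hdeg : ∀ β ∈ h.support, ∀ i, β i < q)
    (α : Fin n →₀ ℕ) (hα : ∀ i, α i < q) :
    ∑ k : Fin n → Fin q, (∏ i, (ζ ^ α i)⁻¹ ^ (k i : ℕ)) * eval (fun i => ζ ^ (k i : ℕ)) h =
      (q : K) ^ n * h.coeff α := by
  have hchar : ∀ β ∈ h.support,
      ∑ k : Fin n → Fin q, ∏ i, (ζ ^ β i / ζ ^ α i) ^ (k i : ℕ) =
        if β = α then (q : K) ^ n else 0 := by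
    intro β hβ
    rw [← Fintype.prod_sum fun i (j : Fin q) => (ζ ^ β i / ζ ^ α i) ^ (j : ℕ)]
    rw [Finset.prod_congr rfl fun i _ => by
      rw [Fin.sum_univ_eq_sum_range (fun j => (ζ ^ β i / ζ ^ α i) ^ j),
        hζ.geom_sum_pow_div_pow (hdeg β hβ i) (hα i)]]
    split_ifs with hβα
    · simp [hβα]
    · obtain ⟨i, hi⟩ := DFunLike.ne_iff.mp hβα
      exact Finset.prod_eq_zero (Finset.mem_univ i) (if_neg hi)
  calc ∑ k : Fin n → Fin q, (∏ i, (ζ ^ α i)⁻¹ ^ (k i : ℕ)) * eval (fun i => ζ ^ (k i : ℕ)) h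
      = ∑ β ∈ h.support, h.coeff β *
          ∑ k : Fin n → Fin q, ∏ i, (ζ ^ β i / ζ ^ α i) ^ (k i : ℕ) := by
        simp only [eval_eq', Finset.mul_sum]
        rw [Finset.sum_comm]
        refine Finset.sum_congr rfl fun β _ => Finset.sum_congr rfl fun k _ => ?_
        simp only [div_eq_mul_inv, mul_pow, Finset.prod_mul_distrib, ← pow_mul, inv_pow]
        simp only [mul_comm ((k _ : Fin q) : ℕ)]
        ring
    _ = (q : K) ^ n * h.coeff α := by
        rw [Finset.sum_congr rfl fun β hβ => congrArg _ (hchar β hβ)]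
        simp only [mul_ite, mul_zero, Finset.sum_ite_eq', mem_support_iff]
        split_ifs with h0
        · ring
        · simp [notMem_support_iff.mp h0]

section GaussNorm

variable {K : Type*} [NontriviallyNormedField K] {n : ℕ}

theorem nnnorm_coeff_le_gaussNorm (f : MvPolynomial (Fin n) K) (α : Fin n →₀ ℕ) :
    ‖f.coeff α‖₊ ≤ gaussNorm f := by
  by_cases hα : α ∈ f.support
  · exact Finset.le_sup (f := fun α => ‖f.coeff α‖₊) hα
  · simp [notMem_support_iff.mp hα]

theorem exists_nnnorm_coeff_eq_gaussNorm {f : MvPolynomial (Fin n) K} (hf : f ≠ 0) :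
    ∃ α ∈ f.support, ‖f.coeff α‖₊ = gaussNorm f := by
  obtain ⟨α, hα, h⟩ :=
    f.support.exists_mem_eq_sup (support_nonempty.mpr hf) fun α => ‖f.coeff α‖₊
  exact ⟨α, hα, h.symm⟩

theorem gaussNorm_pos {f : MvPolynomial (Fin n) K} (hf : f ≠ 0) : 0 < gaussNorm f := by
  obtain ⟨α, hα, h⟩ := exists_nnnorm_coeff_eq_gaussNorm hf
  exact h ▸ nnnorm_pos.mpr (mem_support_iff.mp hα)

theorem nnnorm_eval_le_gaussNorm [IsUltrametricDist K] (f : MvPolynomial (Fin n) K)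
    {z : Fin n → K} (hz : ∀ i, ‖z i‖₊ ≤ 1) : ‖eval z f‖₊ ≤ gaussNorm f := by
  rw [eval_eq']
  refine IsUltrametricDist.nnnorm_sum_le_of_forall_le fun α _ => ?_
  calc ‖f.coeff α * ∏ i, z i ^ α i‖₊ = ‖f.coeff α‖₊ * ∏ i, ‖z i‖₊ ^ α i := by
        simp only [nnnorm_mul, nnnorm_prod, nnnorm_pow]
    _ ≤ ‖f.coeff α‖₊ :=
        mul_le_of_le_one_right' (Finset.prod_le_one' fun i _ => pow_le_one' (hz i) _)
    _ ≤ gaussNorm f := nnnorm_coeff_le_gaussNorm f α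

theorem exists_nnnorm_coeff_eq_gaussNorm_forall_lt (m : MonomialOrder (Fin n))
    {f : MvPolynomial (Fin n) K} (hf : f ≠ 0) :
    ∃ d, ‖f.coeff d‖₊ = gaussNorm f ∧
      ∀ u, m.toSyn u < m.toSyn d → ‖f.coeff u‖₊ < gaussNorm f := by
  obtain ⟨α, hα, hαnorm⟩ := exists_nnnorm_coeff_eq_gaussNorm hf
  obtain ⟨d, hd, hmin⟩ := Finset.exists_min_image
    {α ∈ f.support | ‖f.coeff α‖₊ = gaussNorm f} m.toSyn ⟨α, Finset.mem_filter.mpr ⟨hα, hαnorm⟩⟩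
  refine ⟨d, (Finset.mem_filter.mp hd).2, fun u hu => ?_⟩
  refine (nnnorm_coeff_le_gaussNorm f u).lt_of_ne fun hu' => (hu.trans_le (hmin u ?_)).false
  refine Finset.mem_filter.mpr ⟨mem_support_iff.mpr fun h0 => ?_, hu'⟩
  exact (gaussNorm_pos hf).ne' (by rw [← hu', h0, nnnorm_zero])

open Finset.HasAntidiagonal in
theorem le_gaussNorm_mul [IsUltrametricDist K] (f g : MvPolynomial (Fin n) K) :
    gaussNorm f * gaussNorm g ≤ gaussNorm (f * g) := by
  rcases eq_or_ne f 0 with rfl | hf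
  · simp [gaussNorm]
  rcases eq_or_ne g 0 with rfl | hg
  · simp [gaussNorm]
  -- At the lex-least exponents `a`, `b` where `f`, `g` attain their Gauss norms, the coefficient of
  -- `x ^ (a + b)` in `f * g` is `f_a g_b` plus terms of strictly smaller norm.
  obtain ⟨a, ha, ha_lt⟩ := exists_nnnorm_coeff_eq_gaussNorm_forall_lt MonomialOrder.lex hf
  obtain ⟨b, hb, hb_lt⟩ := exists_nnnorm_coeff_eq_gaussNorm_forall_lt MonomialOrder.lex hg
  have hrest : ∀ p ∈ (antidiagonal (a + b)).erase (a, b),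
      ‖f.coeff p.1 * g.coeff p.2‖₊ < gaussNorm f * gaussNorm g := by
    rintro ⟨u, v⟩ huv
    obtain ⟨hne, huv⟩ := Finset.mem_erase.mp huv
    rw [nnnorm_mul]
    rcases MonomialOrder.lex.toSyn_lt_or_toSyn_lt_of_add_eq (mem_antidiagonal.mp huv) hne
      with hu | hv
    · exact mul_lt_mul_of_lt_of_le_of_nonneg_of_pos (ha_lt u hu) (nnnorm_coeff_le_gaussNorm g v)
        zero_le (gaussNorm_pos hg)
    · exact mul_lt_mul_of_le_of_lt_of_nonneg_of_pos (nnnorm_coeff_le_gaussNorm f u) (hb_lt v hv)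
        zero_le (gaussNorm_pos hf)
  have hsum : ‖∑ p ∈ (antidiagonal (a + b)).erase (a, b), f.coeff p.1 * g.coeff p.2‖₊ <
      gaussNorm f * gaussNorm g :=
    (Finset.nnnorm_sum_le_sup_nnnorm _ _).trans_lt
      ((Finset.sup_lt_iff (mul_pos (gaussNorm_pos hf) (gaussNorm_pos hg))).mpr hrest)
  have hcoeff : ‖(f * g).coeff (a + b)‖₊ = gaussNorm f * gaussNorm g := by
    have hab : (a, b) ∈ antidiagonal (a + b) := mem_antidiagonal.mpr rfl
    rw [coeff_mul, ← Finset.add_sum_erase _ _ hab,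
      IsUltrametricDist.nnnorm_add_eq_max_of_nnnorm_ne_nnnorm, nnnorm_mul, ha, hb]
    · exact max_eq_left hsum.le
    · rw [nnnorm_mul, ha, hb]; exact hsum.ne'
  exact hcoeff ▸ nnnorm_coeff_le_gaussNorm _ _

theorem exists_nnnorm_eval_eq_gaussNorm [IsUltrametricDist K] [IsAlgClosed K]
    (h : MvPolynomial (Fin n) K) :
    ∃ z : Fin n → K, (∀ i, ‖z i‖₊ = 1) ∧ ‖eval z h‖₊ = gaussNorm h := by
  rcases eq_or_ne h 0 with rfl | hh
  · exact ⟨1, fun _ => nnnorm_one, by simp [gaussNorm]⟩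
  obtain ⟨α, hα, hαnorm⟩ := exists_nnnorm_coeff_eq_gaussNorm hh
  obtain ⟨q, hdeg, hq⟩ := exists_lt_natCast_nnnorm_eq_one K h.totalDegree
  have : NeZero q := ⟨by omega⟩
  have : NeZero (q : K) := ⟨fun h0 => by simp [h0] at hq⟩
  obtain ⟨ζ, hζ⟩ := HasEnoughRootsOfUnity.exists_primitiveRoot K q
  have hζnorm : ‖ζ‖₊ = 1 := (pow_eq_one_iff.mp
    (by rw [← nnnorm_pow, hζ.pow_eq_one, nnnorm_one])).resolve_right (NeZero.ne q)
  have hlt : ∀ β ∈ h.support, ∀ i, β i < q := fun β hβ i =>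
    ((monomial_le_degreeOf i hβ).trans (degreeOf_le_totalDegree h i)).trans_lt hdeg
  obtain ⟨k, -, hk⟩ := Finset.univ.exists_max_image
    (fun k : Fin n → Fin q => ‖eval (fun i => ζ ^ (k i : ℕ)) h‖₊) Finset.univ_nonempty
  have hz : ∀ i, ‖ζ ^ (k i : ℕ)‖₊ = 1 := by simp [hζnorm]
  refine ⟨_, hz, (nnnorm_eval_le_gaussNorm h fun i => (hz i).le).antisymm ?_⟩
  calc gaussNorm h = ‖(q : K) ^ n * h.coeff α‖₊ := by simp [hq, hαnorm]
    _ = ‖∑ k : Fin n → Fin q,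
          (∏ i, (ζ ^ α i)⁻¹ ^ (k i : ℕ)) * eval (fun i => ζ ^ (k i : ℕ)) h‖₊ := by
        rw [hζ.sum_mul_eval_pow h hlt α (hlt α hα)]
    _ ≤ ‖eval (fun i => ζ ^ (k i : ℕ)) h‖₊ :=
        IsUltrametricDist.nnnorm_sum_le_of_forall_le fun k' _ => by
          simpa [hζnorm] using hk k' (Finset.mem_univ k')

end GaussNorm

theorem stmt2_general {K : Type*} [NontriviallyNormedField K] [IsUltrametricDist K]
    [IsAlgClosed K]
    (n : ℕ) (f : MvPolynomial (Fin n) K) (hf : f ≠ 0)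
    (Ω : Set (Fin n → K))
    (hopen : ∃ I : Ideal (MvPolynomial (Fin n) K), Ω = (MvPolynomial.zeroLocus K I)ᶜ)
    (hne : Ω.Nonempty) :
    IsGreatest {x : NNReal | ∃ z ∈ Ω, (∀ i, ‖z i‖₊ = 1) ∧ x = ‖MvPolynomial.eval z f‖₊}
      (gaussNorm f) := by
  obtain ⟨I, rfl⟩ := hopen
  obtain ⟨z₀, hz₀⟩ := hne
  obtain ⟨g, hgI, hgz₀⟩ : ∃ g ∈ I, eval z₀ g ≠ 0 := by simpa [mem_zeroLocus_iff] using hz₀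
  have hg : g ≠ 0 := by rintro rfl; simp at hgz₀
  obtain ⟨z, hz, hfgz⟩ := exists_nnnorm_eval_eq_gaussNorm (f * g)
  have hgz : ‖eval z g‖₊ ≤ gaussNorm g := nnnorm_eval_le_gaussNorm g fun i => (hz i).le
  have hmul : gaussNorm f * gaussNorm g ≤ ‖eval z f‖₊ * ‖eval z g‖₊ := by
    rw [← nnnorm_mul, ← map_mul, hfgz]
    exact le_gaussNorm_mul f g
  refine ⟨⟨z, ?_, hz, ?_⟩, ?_⟩
  · simp only [Set.mem_compl_iff, mem_zeroLocus_iff, not_forall]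
    refine ⟨g, hgI, fun (hgz0 : eval z g = 0) => ?_⟩
    rw [hgz0, nnnorm_zero, mul_zero] at hmul
    exact (mul_pos (gaussNorm_pos hf) (gaussNorm_pos hg)).not_ge hmul
  · refine (nnnorm_eval_le_gaussNorm f fun i => (hz i).le).antisymm' ?_
    exact le_of_mul_le_mul_right (hmul.trans (mul_le_mul_right hgz _)) (gaussNorm_pos hg)
  · rintro _ ⟨z', -, hz', rfl⟩
    exact nnnorm_eval_le_gaussNorm f fun i => (hz' i).le

/-- Over `ℂ_p` (modelled as a complete algebraically closed nontrivially normed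
field of characteristic zero with ultrametric norm), for any nonzero polynomial `f`
and any nonempty Zariski open set `Ω ⊆ 𝔸^n`, the Gauss norm of `f` is the maximum
of `|f(z)|` over points `z ∈ Ω` all of whose coordinates have norm `1`. -/
theorem stmt2 {K : Type*} [NontriviallyNormedField K] [IsUltrametricDist K]
    [IsAlgClosed K] [CompleteSpace K] [CharZero K]
    (n : ℕ) (f : MvPolynomial (Fin n) K) (hf : f ≠ 0)
    (Ω : Set (Fin n → K))
    (hopen : ∃ I : Ideal (MvPolynomial (Fin n) K), Ω = (MvPolynomial.zeroLocus K I)ᶜ)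
    (hne : Ω.Nonempty) :
    IsGreatest {x : NNReal | ∃ z ∈ Ω, (∀ i, ‖z i‖₊ = 1) ∧ x = ‖MvPolynomial.eval z f‖₊}
      (gaussNorm f) :=
  stmt2_general n f hf Ω hopen hne
end

section
/- Let F be a field of characteristic zero containing the q-th roots of unity for some integer q > D, let M be a commutative F-algebra of dimension D, and let f, g ∈ M. Write N(h) for the determinant of the multiplication-by-h map on M and Tr(h) for its trace, and let f* be the adjoint element satisfying f*·f = N(f)·1 (defined from the characteristic polynomial of f). Consider Q(t) := N_{M[t]}(t f - g), the determinant of multiplication by (t f - g) on M ⊗_F F[t], a polynomial of degree ≤ D in t with coefficients Q = c_D t^D + ... + c_0. Then Tr(f* g) = -c_{D-1}, and consequently Tr(f* g) = -(1/q) Σ_{ω ∈ G_q} N(ω f - g) ω^{1-D}, where G_q is the group of q-th roots of unity in F. -/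
/-!
The matrix of multiplication by `f*` is the adjugate of the matrix `A` of `f`, since both are
`(-1)^(D-1)` times the quotient of the characteristic polynomial of `A` by `X`, evaluated at `A`.
Expanding `det (t A - B)` row by row, the coefficient of `t^(D-1)` collects the determinants of
`A` with one row replaced by a row of `-B`; by Laplace expansion along that row these sum to
`-tr (adj A * B) = -Tr (f* g)`. Since `Q` has degree at most `D < q`, averaging `Q(ω) ω^(1-D)`
over the `q`-th roots of unity extracts exactly this coefficient.
-/

open Polynomial Finset

namespace Finset

theorem sum_filter_card_eq_card_sub_one {n M : Type*} [Fintype n] [DecidableEq n] [Nonempty n]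
    [AddCommMonoid M] (φ : Finset n → M) :
    ∑ s with s.card = Fintype.card n - 1, φ s = ∑ i, φ {i}ᶜ := by
  have h : ({s | s.card = Fintype.card n - 1} : Finset (Finset n)) =
      univ.image fun i => {i}ᶜ := by
    ext s
    simp only [mem_filter, mem_univ, true_and, mem_image]
    constructor
    · intro hs
      have hc : sᶜ.card = 1 := by
        have := Fintype.card_pos (α := n)
        rw [card_compl, hs]
        omega
      obtain ⟨i, hi⟩ := card_eq_one.mp hc
      exact ⟨i, by rw [← hi, compl_compl]⟩
    · rintro ⟨i, rfl⟩
      rw [card_compl, card_singleton]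
  rw [h, sum_image fun i _ j _ hij => singleton_injective (compl_injective hij)]

end Finset

namespace Matrix

variable {n R S : Type*} [Fintype n] [DecidableEq n] [CommRing R] [CommRing S]

theorem map_sum_charpoly_coeff_smul_pow (A : Matrix n n R) (e : R →+* S) :
    (∑ i ∈ range (Fintype.card n), A.charpoly.coeff (i + 1) • A ^ i).map e =
      ∑ i ∈ range (Fintype.card n), (A.map e).charpoly.coeff (i + 1) • A.map e ^ i := by
  rw [← RingHom.mapMatrix_apply, map_sum]
  refine sum_congr rfl fun i _ => ?_
  rw [RingHom.mapMatrix_apply, map_smul' _ _ _ (map_mul e), ← RingHom.mapMatrix_apply, map_pow,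
    charpoly_map, coeff_map, RingHom.mapMatrix_apply]

theorem mul_sum_charpoly_coeff_smul_pow (A : Matrix n n R) :
    A * ∑ i ∈ range (Fintype.card n), A.charpoly.coeff (i + 1) • A ^ i =
      -(A.charpoly.coeff 0 • 1) := by
  nontriviality R
  have h := aeval_self_charpoly A
  rw [aeval_eq_sum_range, charpoly_natDegree_eq_dim, sum_range_succ'] at h
  simp only [mul_sum, mul_smul_comm, ← pow_succ']
  simpa using eq_neg_of_add_eq_zero_left h

theorem adjugate_eq_sum_charpoly_coeff_smul_pow_of_isRegular [Nonempty n] (A : Matrix n n R)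
    (hA : IsRegular A.det) :
    adjugate A = (-1 : R) ^ (Fintype.card n - 1) •
      ∑ i ∈ range (Fintype.card n), A.charpoly.coeff (i + 1) • A ^ i := by
  refine (isRegular_of_isLeftRegular_det hA.left).left ?_
  obtain ⟨m, hm⟩ := Nat.exists_eq_add_one.mpr (Fintype.card_pos (α := n))
  show A * adjugate A = A * _
  rw [mul_adjugate, mul_smul_comm, mul_sum_charpoly_coeff_smul_pow, det_eq_sign_charpoly_coeff,
    hm, Nat.add_sub_cancel, smul_neg, smul_smul, ← neg_smul]
  congr 1
  ring

/-- The regular case applied to `X • 1 + A`, whose determinant is monic, specialises to `A`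
at `X = 0`. -/
theorem adjugate_eq_sum_charpoly_coeff_smul_pow [Nonempty n] (A : Matrix n n R) :
    adjugate A = (-1 : R) ^ (Fintype.card n - 1) •
      ∑ i ∈ range (Fintype.card n), A.charpoly.coeff (i + 1) • A ^ i := by
  let A' : Matrix n n R[X] := (X : R[X]) • (1 : Matrix n n R[X]) + A.map C
  have hA' : A'.map (evalRingHom 0) = A := by
    ext i j
    by_cases h : i = j <;> simp [A', h]
  have h := congrArg (evalRingHom 0).mapMatrix
    (adjugate_eq_sum_charpoly_coeff_smul_pow_of_isRegular A'
      (Monic.isRegular (leadingCoeff_det_X_one_add_C A)))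
  rwa [RingHom.map_adjugate, RingHom.mapMatrix_apply, RingHom.mapMatrix_apply,
    map_smul' _ _ _ (map_mul _), map_sum_charpoly_coeff_smul_pow, hA', map_pow, map_neg,
    map_one] at h

theorem det_X_smul_add_eq_sum (A B : Matrix n n R) :
    det ((X : R[X]) • A.map C + B.map C) =
      ∑ s : Finset n, monomial s.card (det (of (s.piecewise A B))) := by
  refine (detRowAlternating.toMultilinearMap.map_add_univ _ _).trans (sum_congr rfl fun s _ => ?_)
  change det (of (s.piecewise ((X : R[X]) • A.map C) (B.map C))) = _
  have hs : of (s.piecewise ((X : R[X]) • A.map C) (B.map C)) =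
      diagonal (fun i => if i ∈ s then X else 1) * (of (s.piecewise A B)).map C := by
    refine Matrix.ext fun i j => ?_
    by_cases hi : i ∈ s <;> simp [Finset.piecewise, hi, diagonal_mul, X_mul_C]
  rw [hs, det_mul, det_diagonal, prod_ite_mem, univ_inter, prod_const, ← RingHom.mapMatrix_apply,
    ← RingHom.map_det, ← C_mul_X_pow_eq_monomial, mul_comm]

theorem det_of_piecewise_compl_singleton (A B : Matrix n n R) (i : n) :
    det (of (({i}ᶜ : Finset n).piecewise A B)) = ∑ j, B i j * adjugate A j i := by
  have h : of (({i}ᶜ : Finset n).piecewise A B) = A.updateRow i (B i) := by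
    refine Matrix.ext fun k l => ?_
    by_cases hk : k = i
    · subst hk; simp [Finset.piecewise]
    · simp [Finset.piecewise, hk]
  rw [h, ← cramer_transpose_apply, cramer_eq_adjugate_mulVec, ← adjugate_transpose]
  simp [mulVec, dotProduct, mul_comm]

theorem coeff_det_X_smul_add_card_sub_one [Nonempty n] (A B : Matrix n n R) :
    (det ((X : R[X]) • A.map C + B.map C)).coeff (Fintype.card n - 1) =
      trace (adjugate A * B) := by
  simp only [det_X_smul_add_eq_sum, finsetSum_coeff, coeff_monomial]
  rw [← Finset.sum_filter, sum_filter_card_eq_card_sub_one]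
  simp only [det_of_piecewise_compl_singleton, trace, diag_apply, mul_apply]
  rw [sum_comm]
  simp only [mul_comm]

theorem coeff_det_X_smul_sub_card_sub_one [Nonempty n] (A B : Matrix n n R) :
    (det ((X : R[X]) • A.map C - B.map C)).coeff (Fintype.card n - 1) =
      -trace (adjugate A * B) := by
  rw [sub_eq_add_neg, ← Matrix.map_neg _ (map_neg C), coeff_det_X_smul_add_card_sub_one, mul_neg,
    trace_neg]

theorem natDegree_det_X_smul_sub_le (A B : Matrix n n R) :
    (det ((X : R[X]) • A.map C - B.map C)).natDegree ≤ Fintype.card n := by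
  rw [sub_eq_add_neg, ← Matrix.map_neg _ (map_neg C)]
  exact natDegree_det_X_add_C_le A (-B)

theorem eval_det_X_smul_sub (A B : Matrix n n R) (t : R) :
    (det ((X : R[X]) • A.map C - B.map C)).eval t = det (t • A - B) := by
  rw [← coe_evalRingHom, RingHom.map_det]
  congr 1
  ext i j
  simp only [RingHom.mapMatrix_apply, map_apply, sub_apply, smul_apply, smul_eq_mul,
    coe_evalRingHom, eval_sub, eval_mul, eval_X, eval_C]

end Matrix

namespace Algebra

variable (R : Type*) {S : Type*} [CommRing R] [CommRing S] [Algebra R S] [Module.Free R S]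
  [Module.Finite R S]

/-- The paper's `f*`: by Cayley–Hamilton, `f * f* = N(f)`. -/
noncomputable def adjugate (f : S) : S :=
  (-1 : R) ^ (Module.finrank R S - 1) •
    ∑ i ∈ range (Module.finrank R S), (LinearMap.mulLeft R f).charpoly.coeff (i + 1) • f ^ i

variable {R}

theorem leftMulMatrix_adjugate {ι : Type*} [Fintype ι] [DecidableEq ι] [Nonempty ι]
    (b : Module.Basis ι R S) (f : S) :
    leftMulMatrix b (adjugate R f) = (leftMulMatrix b f).adjugate := by
  nontriviality R
  have hχ : (leftMulMatrix b f).charpoly = (LinearMap.mulLeft R f).charpoly :=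
    LinearMap.charpoly_toMatrix _ b
  rw [Matrix.adjugate_eq_sum_charpoly_coeff_smul_pow, adjugate, ← Module.finrank_eq_card_basis b,
    hχ]
  simp only [map_smul, map_sum, map_pow]

end Algebra

namespace IsPrimitiveRoot

variable {F : Type*} [Field F] {ζ : F} {q : ℕ}

theorem sum_nthRootsFinset_zpow (hζ : IsPrimitiveRoot ζ q) (m : ℤ) :
    ∑ ω ∈ nthRootsFinset q (1 : F), ω ^ m = if (q : ℤ) ∣ m then (q : F) else 0 := by
  rcases q.eq_zero_or_pos with rfl | hq
  · simp
  split_ifs with hm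
  · obtain ⟨k, rfl⟩ := hm
    have h1 : ∀ ω ∈ nthRootsFinset q (1 : F), ω ^ ((q : ℤ) * k) = 1 := fun ω hω => by
      rw [zpow_mul, zpow_natCast, (Polynomial.mem_nthRootsFinset hq 1).mp hω, one_zpow]
    rw [sum_congr rfl h1, sum_const, hζ.card_nthRootsFinset, nsmul_one]
  · have hζm : ζ ^ m ≠ 1 := fun h => hm ((hζ.zpow_eq_one_iff_dvd m).mp h)
    have hinv : ζ ^ m * ∑ ω ∈ nthRootsFinset q (1 : F), ω ^ m =
        ∑ ω ∈ nthRootsFinset q (1 : F), ω ^ m := by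
      rw [mul_sum]
      refine sum_nbij' (ζ * ·) (ζ⁻¹ * ·) (fun ω hω => ?_) (fun ω hω => ?_) (fun ω _ => ?_)
        (fun ω _ => ?_) (fun ω _ => by rw [mul_zpow])
      · simpa using mul_mem_nthRootsFinset (hζ.mem_nthRootsFinset hq) hω
      · simpa using mul_mem_nthRootsFinset (hζ.inv.mem_nthRootsFinset hq) hω
      · simp [hζ.ne_zero hq.ne']
      · simp [hζ.ne_zero hq.ne']
    exact eq_zero_of_mul_eq_self_left hζm hinv

theorem sum_nthRootsFinset_eval_mul_zpow_neg (hζ : IsPrimitiveRoot ζ q) {p : F[X]} {j : ℕ}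
    (hj : j < q) (hp : p.natDegree < j + q) :
    ∑ ω ∈ nthRootsFinset q (1 : F), p.eval ω * ω ^ (-(j : ℤ)) = q * p.coeff j := by
  calc ∑ ω ∈ nthRootsFinset q (1 : F), p.eval ω * ω ^ (-(j : ℤ))
      = ∑ ω ∈ nthRootsFinset q (1 : F), ∑ k ∈ range (j + q), p.coeff k * ω ^ ((k : ℤ) - j) := by
        refine sum_congr rfl fun ω hω => ?_
        rw [eval_eq_sum_range' hp, sum_mul]
        refine sum_congr rfl fun k _ => ?_
        rw [mul_assoc, sub_eq_add_neg, zpow_add₀ (ne_zero_of_mem_nthRootsFinset one_ne_zero hω),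
          zpow_natCast]
    _ = ∑ k ∈ range (j + q), p.coeff k * if (q : ℤ) ∣ (k : ℤ) - j then (q : F) else 0 := by
        rw [sum_comm]
        simp_rw [← mul_sum, hζ.sum_nthRootsFinset_zpow]
    _ = q * p.coeff j := by
        rw [sum_eq_single_of_mem j (mem_range.mpr (by omega)), sub_self, if_pos (dvd_zero _),
          mul_comm]
        intro k hk hkj
        rw [if_neg, mul_zero]
        intro hdvd
        have := Int.eq_zero_of_abs_lt_dvd hdvd (by rw [abs_lt]; rw [mem_range] at hk; omega)
        omega

end IsPrimitiveRoot

theorem stmt8_general {F M : Type*} [Field F] [CommRing M] [Algebra F M]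
    [FiniteDimensional F M] (D : ℕ) (hD : D = Module.finrank F M) (hD1 : 1 ≤ D)
    (q : ℕ) (hq : D < q) (ζ : F) (hζ : IsPrimitiveRoot ζ q) (f g : M) :
    let b := Module.finBasis F M
    let A := (LinearMap.toMatrix b b (LinearMap.mulLeft F f)).map Polynomial.C
    let B := (LinearMap.toMatrix b b (LinearMap.mulLeft F g)).map Polynomial.C
    let Q := (((Polynomial.X : Polynomial F) • A) - B).det
    let fstar := (-1 : F) ^ (D - 1) •
      ∑ i ∈ Finset.range D, ((LinearMap.mulLeft F f).charpoly.coeff (i + 1)) • f ^ i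
    LinearMap.trace F M (LinearMap.mulLeft F (fstar * g)) = -Q.coeff (D - 1) ∧
    LinearMap.trace F M (LinearMap.mulLeft F (fstar * g)) =
      -(q : F)⁻¹ * ∑ ω ∈ Polynomial.nthRootsFinset q (1 : F),
        LinearMap.det (LinearMap.mulLeft F (ω • f - g)) * ω ^ ((1 : ℤ) - D) := by
  intro b A B Q fstar
  have : Nonempty (Fin (Module.finrank F M)) := ⟨⟨0, hD ▸ hD1⟩⟩
  have : NeZero q := ⟨by omega⟩
  have hcard : Fintype.card (Fin (Module.finrank F M)) = D := by simp [hD]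
  have htrace : LinearMap.trace F M (LinearMap.mulLeft F (fstar * g)) =
      -Q.coeff (D - 1) := by
    have hfstar : fstar = Algebra.adjugate F f := by subst hD; rfl
    rw [LinearMap.trace_eq_matrix_trace F b, Algebra.toMatrix_lmul_eq, map_mul, hfstar,
      Algebra.leftMulMatrix_adjugate, ← hcard, Matrix.coeff_det_X_smul_sub_card_sub_one, neg_neg]
    rfl
  have hN : ∀ ω : F, LinearMap.det (LinearMap.mulLeft F (ω • f - g)) = Q.eval ω := fun ω => by
    rw [← LinearMap.det_toMatrix b, Algebra.toMatrix_lmul_eq, map_sub, map_smul,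
      Matrix.eval_det_X_smul_sub]
    rfl
  have hdeg : Q.natDegree < (D - 1) + q :=
    (Matrix.natDegree_det_X_smul_sub_le _ _).trans_lt (by omega)
  have hexp : (1 : ℤ) - D = -((D - 1 : ℕ) : ℤ) := by omega
  refine ⟨htrace, ?_⟩
  simp_rw [hN, hexp]
  rw [hζ.sum_nthRootsFinset_eval_mul_zpow_neg (by omega) hdeg, htrace, ← mul_assoc, neg_mul,
    inv_mul_cancel₀ hζ.neZero'.out, neg_one_mul]

/-- Let `F` be a field of characteristic zero containing the `q`-th roots of unity
for some `q > D`, `M` a commutative `F`-algebra of dimension `D ≥ 1`, and `f, g ∈ M`.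
Let `Q(t) = c_D t^D + ⋯ + c_0` be the determinant of multiplication by `t f - g` on
`M ⊗_F F[t]` (computed as `det(t·A - B)` for matrices `A, B` of `m_f, m_g`), and let
`f*` be the adjoint of `f` defined from the characteristic polynomial of `m_f`.
Then `Tr(f* g) = -c_{D-1}`, and consequently
`Tr(f* g) = -(1/q) Σ_{ω ∈ G_q} N(ω f - g) ω^{1-D}`. -/
theorem stmt8 {F M : Type*} [Field F] [CharZero F] [CommRing M] [Algebra F M]
    [FiniteDimensional F M] (D : ℕ) (hD : D = Module.finrank F M) (hD1 : 1 ≤ D)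
    (q : ℕ) (hq : D < q) (ζ : F) (hζ : IsPrimitiveRoot ζ q) (f g : M) :
    let b := Module.finBasis F M
    let A := (LinearMap.toMatrix b b (LinearMap.mulLeft F f)).map Polynomial.C
    let B := (LinearMap.toMatrix b b (LinearMap.mulLeft F g)).map Polynomial.C
    let Q := (((Polynomial.X : Polynomial F) • A) - B).det
    let fstar := (-1 : F) ^ (D - 1) •
      ∑ i ∈ Finset.range D, ((LinearMap.mulLeft F f).charpoly.coeff (i + 1)) • f ^ i
    LinearMap.trace F M (LinearMap.mulLeft F (fstar * g)) = -Q.coeff (D - 1) ∧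
    LinearMap.trace F M (LinearMap.mulLeft F (fstar * g)) =
      -(q : F)⁻¹ * ∑ ω ∈ Polynomial.nthRootsFinset q (1 : F),
        LinearMap.det (LinearMap.mulLeft F (ω • f - g)) * ω ^ ((1 : ℤ) - D) :=
  stmt8_general D hD hD1 q hq ζ hζ f g
end
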